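/- Suppose integers a, b ≥ 0 with a + b = 8, s ∈ ℤ, and 2×2 integer matrices M, N of determinant 1 satisfy M·M(1)·N = [[-s,-1],[s+1,1]] and N·M(1)·M·M(1)·M(2)^a·M(s+5)·M(2)^b·M(1) = I, where M(k) = [[0,-1],[1,k]]. Writing M = [[x,y],[z,w]], if (a,b,s) = (0,8,2) then 55z² - 95zw + 41w² + 1 = 0. -/

import Mathlib

/-!
Eliminating `N` between the two equations gives `M * M(1) = C * M(1) * M * R` with
`C = [[-2,-1],[3,1]]` and `R = M(1) M(7) M(2)^8 M(1) = [[-55,-6],[46,5]]`. Two entries of this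
identity are linear in `x, y` with unimodular coefficient matrix, so they express `x, y` in terms
of `z, w`; substituting into `xw - yz = 1` gives the quadratic relation.
-/

/-- The matrix associated to a curve of self-intersection `-k`. -/
def chainMat (k : ℤ) : Matrix (Fin 2) (Fin 2) ℤ := !![0, -1; 1, k]

theorem chainMat_two_pow (n : ℕ) :
    chainMat 2 ^ n = !![1 - (n : ℤ), -n; n, n + 1] := by
  induction n with
  | zero => simp [Matrix.one_fin_two]
  | succ n ih =>
    rw [pow_succ, ih, chainMat, Matrix.mul_fin_two]
    refine congrArg Matrix.of (Matrix.vec2_eq (Matrix.vec2_eq ?_ ?_) (Matrix.vec2_eq ?_ ?_)) <;>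
      push_cast <;> ring

theorem eq_mul_of_mul_eq_of_mul_eq_one {M : Type*} [Monoid M] {a n c d : M}
    (h : a * n = c) (hn : n * d = 1) : a = c * d := by
  rw [← h, mul_assoc, hn, mul_one]

theorem pell_of_mul_chainMat_one_eq {x y z w : ℤ} (hdet : x * w - y * z = 1)
    (h : !![x, y; z, w] * chainMat 1 =
      !![-1, 1; 1, -2] * !![x, y; z, w] * !![-55, -6; 46, 5]) :
    55 * z ^ 2 - 95 * z * w + 41 * w ^ 2 + 1 = 0 := by
  simp only [chainMat, Matrix.mul_fin_two, EmbeddingLike.apply_eq_iff_eq,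
    Matrix.vecCons_inj] at h
  obtain ⟨⟨-, h01, -⟩, ⟨-, h11, -⟩, -⟩ := h
  -- `h01`, `h11` give `x = 48z - 41w` and `y = 55z - 47w`
  linear_combination (-1 : ℤ) * hdet + (5 * w - 6 * z) * h01 + (6 * w - 7 * z) * h11

theorem case_I_smooth_pell_general (a b : ℕ) (s x y z w : ℤ)
    (N : Matrix (Fin 2) (Fin 2) ℤ)
    (hM : (!![x, y; z, w] : Matrix (Fin 2) (Fin 2) ℤ).det = 1)
    (h1 : !![x, y; z, w] * chainMat 1 * N = !![-s, -1; s + 1, 1])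
    (h2 : N * chainMat 1 * !![x, y; z, w] * chainMat 1 * chainMat 2 ^ a *
        chainMat (s + 5) * chainMat 2 ^ b * chainMat 1 = 1)
    (hcase : a = 0 ∧ b = 8 ∧ s = 2) :
    55 * z ^ 2 - 95 * z * w + 41 * w ^ 2 + 1 = 0 := by
  obtain ⟨rfl, rfl, rfl⟩ := hcase
  have hC : !![-2, -1; 2 + 1, 1] * chainMat 1 = !![-1, 1; 1, -2] := by
    simp only [chainMat, Matrix.mul_fin_two]
    norm_num
  have hR : chainMat 1 * chainMat (2 + 5) * chainMat 2 ^ 8 * chainMat 1 =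
      !![-55, -6; 46, 5] := by
    rw [chainMat_two_pow]
    simp only [chainMat, Matrix.mul_fin_two]
    norm_num
  have hElim := eq_mul_of_mul_eq_of_mul_eq_one h1
    (d := chainMat 1 * !![x, y; z, w] * chainMat 1 * chainMat (2 + 5) * chainMat 2 ^ 8 *
      chainMat 1) (by simpa only [pow_zero, mul_one, mul_assoc] using h2)
  refine pell_of_mul_chainMat_one_eq (by simpa [Matrix.det_fin_two_of] using hM) ?_
  rw [hElim, ← hR, ← hC]
  simp only [mul_assoc]

/-- In Case I of the smooth case, with `(a,b,s) = (0,8,2)`, the entries `z, w`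
of the chain matrix `M = [[x,y],[z,w]]` satisfy the Pell-type relation
`55z² - 95zw + 41w² + 1 = 0`. -/
theorem case_I_smooth_pell (a b : ℕ) (s x y z w : ℤ)
    (N : Matrix (Fin 2) (Fin 2) ℤ)
    (hab : a + b = 8)
    (hM : (!![x, y; z, w] : Matrix (Fin 2) (Fin 2) ℤ).det = 1)
    (hN : N.det = 1)
    (h1 : !![x, y; z, w] * chainMat 1 * N = !![-s, -1; s + 1, 1])
    (h2 : N * chainMat 1 * !![x, y; z, w] * chainMat 1 * chainMat 2 ^ a *
        chainMat (s + 5) * chainMat 2 ^ b * chainMat 1 = 1)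
    (hcase : a = 0 ∧ b = 8 ∧ s = 2) :
    55 * z ^ 2 - 95 * z * w + 41 * w ^ 2 + 1 = 0 :=
  case_I_smooth_pell_general a b s x y z w N hM h1 h2 hcase
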